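/- With Y a polyhedron {y : aᵢ·y ≤ bᵢ, i=1,…,m} and y₀ strictly interior, the α-projection map s ↦ α*(s)·s + (1-α*(s))·y₀, where α*(s) = min(1, minᵢ bounds as above), is continuous on ℝⁿ. -/

import Mathlib

/-!
Clamping `aᵢ·s` at `bᵢ` replaces the `i`-th ratio by `(bᵢ - aᵢ·y₀) / (max (aᵢ·s) bᵢ - aᵢ·y₀)`,
whose denominator stays `≥ bᵢ - aᵢ·y₀ > 0`, so it is continuous in `s` and defined for every
constraint. Each clamped ratio is `1` or an original ratio, and each original ratio dominates its
clamped version, so `α*` is the minimum of `1` and finitely many continuous functions.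
-/

open Set

theorem continuous_sInf_insert_range {X ι : Type*} [TopologicalSpace X] [Fintype ι]
    {g : ι → X → ℝ} (hg : ∀ i, Continuous (g i)) (a : ℝ) :
    Continuous fun x => sInf (insert a (range fun i => g i x)) := by
  let h : Option ι → X → ℝ := fun o x => o.elim a (g · x)
  have h_inf : ∀ x, sInf (insert a (range fun i => g i x)) =
      Finset.univ.inf' Finset.univ_nonempty (h · x) := by
    intro x
    rw [Finset.inf'_univ_eq_ciInf, iInf, ← Option.range_elim]
  simp only [h_inf]
  refine Continuous.finset_inf'_apply _ fun o _ => ?_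
  cases o with
  | none => exact continuous_const
  | some i => exact hg i

theorem div_max_sub_mem_insert_one_image {ι : Type*} {b e f : ι → ℝ} (he : ∀ i, e i < b i)
    (i : ι) :
    (b i - e i) / (max (f i) (b i) - e i) ∈
      insert 1 ((fun i => (b i - e i) / (f i - e i)) '' {i | e i < f i}) := by
  rcases le_total (f i) (b i) with hfb | hbf
  · left
    rw [max_eq_right hfb, div_self (sub_pos.2 (he i)).ne']
  · right
    exact ⟨i, (he i).trans_le hbf, by rw [max_eq_left hbf]⟩

theorem sInf_insert_one_div_image_eq {ι : Type*} [Finite ι] {b e f : ι → ℝ}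
    (he : ∀ i, e i < b i) :
    sInf (insert 1 ((fun i => (b i - e i) / (f i - e i)) '' {i | e i < f i})) =
      sInf (insert 1 (range fun i => (b i - e i) / (max (f i) (b i) - e i))) := by
  apply le_antisymm
  · refine csInf_le_csInf (((toFinite {i | e i < f i}).image _).insert 1).bddBelow
      (insert_nonempty _ _) (insert_subset (mem_insert _ _) ?_)
    rintro _ ⟨i, rfl⟩
    exact div_max_sub_mem_insert_one_image he i
  · refine le_csInf (insert_nonempty _ _) ?_
    rintro _ (rfl | ⟨i, hi, rfl⟩)
    · exact csInf_le (toFinite _).bddBelow (mem_insert _ _)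
    · calc _ ≤ (b i - e i) / (max (f i) (b i) - e i) :=
            csInf_le (toFinite _).bddBelow (mem_insert_of_mem _ (mem_range_self i))
        _ ≤ (b i - e i) / (f i - e i) := by
            gcongr
            · exact (sub_pos.2 (he i)).le
            · exact sub_pos.2 hi
            · exact le_max_left _ _

/-- Continuity of the α-projection map for a polytope with strictly interior
base point. -/
theorem alpha_projection_continuous
    {n m : ℕ} (a : Fin m → Fin n → ℝ) (b : Fin m → ℝ)
    (y₀ : Fin n → ℝ) (hy₀ : ∀ i, ∑ j, a i j * y₀ j < b i)
    (αstar : (Fin n → ℝ) → ℝ)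
    (hα : ∀ s, αstar s = sInf (insert (1:ℝ)
      ((fun i => (b i - ∑ j, a i j * y₀ j) /
          ((∑ j, a i j * s j) - ∑ j, a i j * y₀ j)) ''
        {i : Fin m | ∑ j, a i j * y₀ j < ∑ j, a i j * s j}))) :
    Continuous (fun s => αstar s • s + (1 - αstar s) • y₀) := by
  have hα_clamped : αstar = fun s => sInf (insert 1 (range fun i =>
      (b i - ∑ j, a i j * y₀ j) / (max (∑ j, a i j * s j) (b i) - ∑ j, a i j * y₀ j))) :=
    funext fun s => (hα s).trans (sInf_insert_one_div_image_eq hy₀)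
  have hα_cont : Continuous αstar := by
    rw [hα_clamped]
    refine continuous_sInf_insert_range (fun i => ?_) 1
    exact continuous_const.div (by fun_prop) fun s =>
      (sub_pos.2 ((hy₀ i).trans_le (le_max_right _ _))).ne'
  fun_prop
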